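/- arXiv:1801.05263 — 11 statements merged into one kernel-verified Lean document; each statement's English description precedes it below -/
import Mathlib

section
/- A nonempty metric space (X, d) satisfies the Ekeland maximum principle if and only if X is a complete metric space. That is: the following are equivalent for a nonempty metric space X: (a) X is complete; (b) for every upper semicontinuous function u : X → ℝ that is bounded from above and every ε > 0, there exists a point x ∈ X such that u(x) > sup_X u − ε and u(y) ≤ u(x) + ε · d(x, y) for every y ∈ X. -/
open Filter Topology Set

/-- A nonempty metric space satisfies the Ekeland maximum principle if and only if it is
complete. -/
theorem ekeland_maximum_principle_iff_complete {X : Type*} [MetricSpace X] [Nonempty X] :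
    CompleteSpace X ↔
      ∀ u : X → ℝ, UpperSemicontinuous u → BddAbove (Set.range u) →
        ∀ ε : ℝ, 0 < ε →
          ∃ x : X, (⨆ y, u y) - ε < u x ∧ ∀ y : X, u y ≤ u x + ε * dist x y := by
  constructor
  · intro hC u hu hb ε hε
    obtain ⟨B, hB⟩ := hb
    set S : X → Set X := fun x => {y | u x + ε * dist x y ≤ u y} with hS
    have hself : ∀ p : X, p ∈ S p := by intro p; simp [hS]
    have hsub : ∀ p q : X, q ∈ S p → S q ⊆ S p := by
      intro p q hq r hr
      simp only [hS, mem_setOf_eq] at *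
      have h3 := dist_triangle p q r
      nlinarith
    have hbdd : ∀ p : X, BddAbove (u '' S p) :=
      fun p => BddAbove.mono (image_subset_range u _) ⟨B, hB⟩
    have hne : ∀ p : X, (u '' S p).Nonempty := fun p => ⟨u p, p, hself p, rfl⟩
    have hTle : ∀ p : X, u p ≤ sSup (u '' S p) := fun p => le_csSup (hbdd p) ⟨p, hself p, rfl⟩
    have hex : ∀ p : X, ∃ q ∈ S p, sSup (u '' S p) + u p ≤ 2 * u q := by
      intro p
      rcases eq_or_lt_of_le (hTle p) with h | h
      · exact ⟨p, hself p, by linarith⟩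
      · obtain ⟨v, hv, hvlt⟩ := exists_lt_of_lt_csSup (hne p)
          (show (sSup (u '' S p) + u p) / 2 < sSup (u '' S p) by linarith)
        obtain ⟨q, hq, rfl⟩ := hv
        exact ⟨q, hq, by linarith⟩
    choose F hF1 hF2 using hex
    obtain ⟨x₀, hx₀⟩ := exists_lt_of_lt_ciSup (sub_lt_self (⨆ y, u y) hε)
    set x : ℕ → X := fun n => F^[n] x₀ with hxdef
    have hx0 : x 0 = x₀ := rfl
    have hstep : ∀ n, x (n + 1) = F (x n) := fun n => Function.iterate_succ_apply' F n x₀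
    have hmemsucc : ∀ n, x (n + 1) ∈ S (x n) := fun n => by rw [hstep]; exact hF1 _
    have hmono : ∀ n, u (x n) ≤ u (x (n + 1)) := by
      intro n
      have h1 := hmemsucc n
      simp only [hS, mem_setOf_eq] at h1
      nlinarith [dist_nonneg (x := x n) (y := x (n + 1))]
    have hmono' : Monotone fun n => u (x n) := monotone_nat_of_le_succ hmono
    have hchain : ∀ n m, n ≤ m → x m ∈ S (x n) := by
      intro n m hnm
      induction hnm with
      | refl => exact hself _
      | step h ih => exact hsub _ _ ih (hmemsucc _)
    have hbb : BddAbove (Set.range fun n => u (x n)) := by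
      refine ⟨B, ?_⟩; rintro v ⟨n, rfl⟩; exact hB ⟨x n, rfl⟩
    set L := ⨆ n, u (x n) with hL
    have hconv : Tendsto (fun n => u (x n)) atTop (𝓝 L) := tendsto_atTop_ciSup hmono' hbb
    have hcauchy : CauchySeq x := by
      rw [Metric.cauchySeq_iff]
      intro δ hδ
      have hcu := hconv.cauchySeq
      rw [Metric.cauchySeq_iff] at hcu
      obtain ⟨N, hN⟩ := hcu (ε * δ) (by positivity)
      have key : ∀ m ≥ N, ∀ n ≥ N, m ≤ n → dist (x m) (x n) < δ := by
        intro m hm n hn hmn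
        have h1 := hchain m n hmn
        simp only [hS, mem_setOf_eq] at h1
        have h2 := hN n hn m hm
        rw [Real.dist_eq] at h2
        have habs : u (x n) - u (x m) ≤ |u (x n) - u (x m)| := le_abs_self _
        nlinarith
      refine ⟨N, fun m hm n hn => ?_⟩
      rcases le_total m n with h | h
      · exact key m hm n hn h
      · rw [dist_comm]; exact key n hn m hm h
    obtain ⟨z, hz⟩ := cauchySeq_tendsto_of_complete hcauchy
    have hLz : L ≤ u z := by
      by_contra h
      push_neg at h
      have h2 := hu z ((u z + L) / 2) (by linarith)
      have h3 := hz.eventually h2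
      have h4 : ∀ᶠ n in atTop, (u z + L) / 2 < u (x n) :=
        hconv.eventually_const_lt (by linarith)
      obtain ⟨n, hn1, hn2⟩ := (h3.and h4).exists
      linarith
    have hzS : ∀ n, z ∈ S (x n) := by
      intro n
      have h1 : Tendsto (fun m => u (x n) + ε * dist (x n) (x m)) atTop
          (𝓝 (u (x n) + ε * dist (x n) z)) :=
        tendsto_const_nhds.add ((tendsto_const_nhds.dist hz).const_mul ε)
      have h2 : u (x n) + ε * dist (x n) z ≤ L := by
        refine le_of_tendsto_of_tendsto h1 hconv ?_
        filter_upwards [eventually_ge_atTop n] with m hm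
        exact hchain n m hm
      simp only [hS, mem_setOf_eq]
      linarith
    have hx0z : u (x 0) ≤ u z := by
      have h1 := hzS 0
      simp only [hS, mem_setOf_eq] at h1
      nlinarith [dist_nonneg (x := x 0) (y := z)]
    refine ⟨z, by rw [← hx0] at hx₀; linarith, fun y => ?_⟩
    by_contra hy
    push_neg at hy
    have hyS : y ∈ S z := by simp only [hS, mem_setOf_eq]; linarith
    have hyn : ∀ n, y ∈ S (x n) := fun n => hsub _ _ (hzS n) hyS
    have huyT : ∀ n, u y ≤ sSup (u '' S (x n)) := fun n => le_csSup (hbdd _) ⟨y, hyn n, rfl⟩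
    have hgap : ∀ n, sSup (u '' S (x n)) - u (x n) ≤
        (sSup (u '' S (x 0)) - u (x 0)) / 2 ^ n := by
      intro n
      induction n with
      | zero => simp
      | succ n ih =>
        have h1 : sSup (u '' S (x (n + 1))) ≤ sSup (u '' S (x n)) :=
          csSup_le_csSup (hbdd _) (hne _) (image_mono (f := u) (hsub _ _ (hmemsucc n)))
        have h2 : sSup (u '' S (x n)) + u (x n) ≤ 2 * u (x (n + 1)) := by
          rw [hstep n]; exact hF2 (x n)
        rw [pow_succ, ← div_div]
        linarith
    have hxL : ∀ n, u (x n) ≤ L := fun n => le_ciSup hbb n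
    have hkey : ∀ n : ℕ, u y ≤ u z + (sSup (u '' S (x 0)) - u (x 0)) / 2 ^ n := by
      intro n
      have h1 := huyT n
      have h2 := hgap n
      have h3 := hxL n
      linarith
    have hlim : Tendsto (fun n : ℕ => u z + (sSup (u '' S (x 0)) - u (x 0)) / 2 ^ n)
        atTop (𝓝 (u z + 0)) := by
      refine tendsto_const_nhds.add ?_
      have h1 : Tendsto (fun n : ℕ => (1 / 2 : ℝ) ^ n) atTop (𝓝 0) :=
        tendsto_pow_atTop_nhds_zero_of_lt_one (by norm_num) (by norm_num)
      have := h1.const_mul (sSup (u '' S (x 0)) - u (x 0))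
      rw [mul_zero] at this
      convert this using 2 with n
      rw [div_pow, one_pow, div_eq_mul_inv, mul_comm, inv_eq_one_div, div_eq_mul_inv, one_mul,
        mul_comm]
    have huyz : u y ≤ u z := by
      have := ge_of_tendsto' hlim hkey
      linarith
    nlinarith [dist_nonneg (x := z) (y := y)]
  · intro H
    apply Metric.complete_of_cauchySeq_tendsto
    intro f hf
    have hgex : ∀ p : X, ∃ l : ℝ, Tendsto (fun n => dist p (f n)) atTop (𝓝 l) := by
      intro p
      apply cauchySeq_tendsto_of_complete
      rw [Metric.cauchySeq_iff] at hf ⊢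
      intro δ hδ
      obtain ⟨N, hN⟩ := hf δ hδ
      refine ⟨N, fun m hm n hn => lt_of_le_of_lt ?_ (hN m hm n hn)⟩
      rw [Real.dist_eq]
      have := abs_dist_sub_le (f m) (f n) p
      simpa [dist_comm] using this
    choose g hg using hgex
    have hgnn : ∀ p : X, 0 ≤ g p := fun p => ge_of_tendsto' (hg p) fun n => dist_nonneg
    have hlip : ∀ a b : X, g a ≤ g b + dist a b := by
      intro a b
      refine le_of_tendsto_of_tendsto' (hg a) ((hg b).add tendsto_const_nhds) fun n => ?_
      have := dist_triangle a b (f n)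
      linarith
    have hcont : Continuous g := by
      refine (LipschitzWith.of_dist_le_mul (K := 1) fun a b => ?_).continuous
      rw [NNReal.coe_one, one_mul, Real.dist_eq, abs_le]
      constructor
      · have := hlip b a; rw [dist_comm] at this; linarith
      · have := hlip a b; linarith
    set u : X → ℝ := fun p => -g p with hu
    have husc : UpperSemicontinuous u := hcont.neg.upperSemicontinuous
    have hbdd : BddAbove (Set.range u) := by
      refine ⟨0, ?_⟩; rintro v ⟨p, rfl⟩; simp [hu, hgnn p]
    have hgf : Tendsto (fun n => g (f n)) atTop (𝓝 0) := by
      rw [Metric.tendsto_atTop]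
      intro δ hδ
      rw [Metric.cauchySeq_iff] at hf
      obtain ⟨N, hN⟩ := hf (δ / 2) (by linarith)
      refine ⟨N, fun n hn => ?_⟩
      have h1 : g (f n) ≤ δ / 2 := by
        refine le_of_tendsto (hg (f n)) ?_
        filter_upwards [eventually_ge_atTop N] with m hm
        exact (hN n hn m hm).le
      rw [Real.dist_eq, sub_zero, abs_of_nonneg (hgnn _)]
      linarith
    obtain ⟨p, -, hp2⟩ := H u husc hbdd (1 / 2) (by norm_num)
    have hkey : ∀ n, -g (f n) ≤ -g p + (1 / 2) * dist p (f n) := fun n => hp2 (f n)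
    have h0 : -(0 : ℝ) ≤ -g p + (1 / 2) * g p :=
      le_of_tendsto_of_tendsto' hgf.neg
        (tendsto_const_nhds.add ((hg p).const_mul _)) hkey
    have hgp : g p = 0 := le_antisymm (by linarith) (hgnn p)
    refine ⟨p, ?_⟩
    rw [tendsto_iff_dist_tendsto_zero]
    have := hg p
    rw [hgp] at this
    simpa [dist_comm] using this
end

section
/- Let (X, d) be a complete metric space, let u : X → ℝ be upper semicontinuous and bounded from above, and let ε > 0, δ > 0. If x̄ ∈ X satisfies u(x̄) > sup_X u − ε, then there exists a point x ∈ X such that u(x) ≥ u(x̄), d(x, x̄) ≤ δ, and u(y) ≤ u(x) + (ε/δ) · d(x, y) for every y ∈ X. -/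
/-!
Call `y` a `c`-improvement of `p` when `u p + c * d(p, y) ≤ u y`. The sets of `c`-improvements
are closed (by upper semicontinuity) and nested, and since `u` is bounded above one can move to an
improvement `q` of `p` that almost attains the supremum of `u` over the improvements of `p`, which
confines the improvements of `q` to a small ball around `q`. Iterating with radii tending to zero,
Cantor's intersection theorem produces a point `x` whose only improvement is `x` itself: this is
the Ekeland inequality at `x`. Since `x` improves `x̄`, `c * d(x̄, x) ≤ u x - u x̄ < ε`, which gives
`d(x, x̄) < δ` for `c = ε / δ`.
-/

open Filter Metric Set Topology

section Shrinking

variable {X : Type*} [MetricSpace X]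

theorem exists_mem_eq_singleton_of_shrinking [CompleteSpace X] {S : X → Set X}
    (hself : ∀ p, p ∈ S p) (htrans : ∀ p q, q ∈ S p → S q ⊆ S p)
    (hclosed : ∀ p, IsClosed (S p))
    (hshrink : ∀ p (r : ℝ), 0 < r → ∃ q ∈ S p, S q ⊆ closedBall q r) (p : X) :
    ∃ x ∈ S p, S x = {x} := by
  choose next hnext_mem hnext_ball using fun (n : ℕ) p ↦
    hshrink p (1 / (n + 1)) Nat.one_div_pos_of_nat
  let x : ℕ → X := fun n ↦ Nat.rec p (fun k q ↦ next k q) n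
  have hanti : Antitone fun n ↦ S (x n) :=
    antitone_nat_of_succ_le fun n ↦ htrans _ _ (hnext_mem n (x n))
  have hbounded (n : ℕ) : Bornology.IsBounded (S (x (n + 1))) :=
    isBounded_closedBall.subset (hnext_ball _ _)
  have hdiam_le (n : ℕ) : diam (S (x (n + 1))) ≤ 2 * (1 / (n + 1)) :=
    (diam_mono (hnext_ball _ _) isBounded_closedBall).trans (diam_closedBall (by positivity))
  have hdiam : Tendsto (fun n : ℕ ↦ diam (S (x (n + 1)))) atTop (𝓝 0) := by
    refine squeeze_zero (fun _ ↦ diam_nonneg) hdiam_le ?_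
    simpa using tendsto_one_div_add_atTop_nhds_zero_nat.const_mul (2 : ℝ)
  obtain ⟨y, hy⟩ := nonempty_iInter_of_nonempty_biInter (fun n ↦ hclosed _) hbounded
    (fun N ↦ ⟨x (N + 1), mem_iInter₂.2 fun n hn ↦ hanti (by omega : n + 1 ≤ N + 1) (hself _)⟩)
    hdiam
  rw [mem_iInter] at hy
  refine ⟨y, hanti (Nat.zero_le 1) (hy 0),
    subset_antisymm (fun z hz ↦ ?_) (singleton_subset_iff.2 (hself y))⟩
  have hz_mem (n : ℕ) : z ∈ S (x (n + 1)) := htrans _ _ (hy n) hz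
  have hdist : Tendsto (fun _ : ℕ ↦ dist z y) atTop (𝓝 0) :=
    squeeze_zero (fun _ ↦ dist_nonneg)
      (fun n ↦ dist_le_diam_of_mem (hbounded n) (hz_mem n) (hy n)) hdiam
  exact dist_eq_zero.1 (tendsto_nhds_unique tendsto_const_nhds hdist)

end Shrinking

section Ekeland

variable {X : Type*} [MetricSpace X] {u : X → ℝ} {c : ℝ} {p q y : X}

def ekelandSet (u : X → ℝ) (c : ℝ) (p : X) : Set X :=
  {y | u p + c * dist p y ≤ u y}

theorem mem_ekelandSet_self (u : X → ℝ) (c : ℝ) (p : X) : p ∈ ekelandSet u c p := by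
  simp [ekelandSet]

theorem le_of_mem_ekelandSet (hc : 0 ≤ c) (hy : y ∈ ekelandSet u c p) : u p ≤ u y :=
  le_trans (le_add_of_nonneg_right (mul_nonneg hc dist_nonneg)) hy

theorem ekelandSet_subset (hc : 0 ≤ c) (hq : q ∈ ekelandSet u c p) :
    ekelandSet u c q ⊆ ekelandSet u c p := fun y (hy : u q + c * dist q y ≤ u y) ↦ by
  have htri : c * dist p y ≤ c * dist p q + c * dist q y := by
    rw [← mul_add]; exact mul_le_mul_of_nonneg_left (dist_triangle p q y) hc
  change u p + c * dist p y ≤ u y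
  linarith [show u p + c * dist p q ≤ u q from hq]

theorem isClosed_ekelandSet (hu : UpperSemicontinuous u) (c : ℝ) (p : X) :
    IsClosed (ekelandSet u c p) := by
  have husc : UpperSemicontinuous fun y ↦ u y + -(c * dist p y) :=
    hu.add (by fun_prop : Continuous fun y ↦ -(c * dist p y)).upperSemicontinuous
  convert husc.isClosed_preimage (u p) using 1
  ext y
  simp only [ekelandSet, mem_ofPred_eq, mem_preimage, mem_Ici]
  constructor <;> intro h <;> linarith

theorem exists_mem_ekelandSet_subset_closedBall (hbdd : BddAbove (range u)) (hc : 0 < c)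
    (p : X) {r : ℝ} (hr : 0 < r) :
    ∃ q ∈ ekelandSet u c p, ekelandSet u c q ⊆ closedBall q r := by
  have hne : (u '' ekelandSet u c p).Nonempty := ⟨u p, p, mem_ekelandSet_self u c p, rfl⟩
  obtain ⟨_, ⟨q, hq, rfl⟩, hq_near⟩ :=
    exists_lt_of_lt_csSup hne (sub_lt_self _ (mul_pos hc hr))
  refine ⟨q, hq, fun y hy ↦ ?_⟩
  have hy_le : u y ≤ sSup (u '' ekelandSet u c p) :=
    le_csSup (hbdd.mono (image_subset_range _ _)) ⟨y, ekelandSet_subset hc.le hq hy, rfl⟩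
  have hy' : u q + c * dist q y ≤ u y := hy
  rw [mem_closedBall, dist_comm]
  exact le_of_lt (lt_of_mul_lt_mul_left (by linarith) hc.le)

theorem exists_mem_ekelandSet_forall_le [CompleteSpace X] (hu : UpperSemicontinuous u)
    (hbdd : BddAbove (range u)) (hc : 0 < c) (p : X) :
    ∃ x ∈ ekelandSet u c p, ∀ y, u y ≤ u x + c * dist x y := by
  obtain ⟨x, hx, hx_max⟩ := exists_mem_eq_singleton_of_shrinking (mem_ekelandSet_self u c)
    (fun _ _ ↦ ekelandSet_subset hc.le) (isClosed_ekelandSet hu c)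
    (fun p _ ↦ exists_mem_ekelandSet_subset_closedBall hbdd hc p) p
  refine ⟨x, hx, fun y ↦ le_of_not_gt fun hlt ↦ ?_⟩
  have hy : y ∈ ekelandSet u c x := hlt.le
  rw [hx_max, mem_singleton_iff] at hy
  subst hy
  simp at hlt

end Ekeland

/-- Localized Ekeland variational principle (maximization form): on a complete metric space,
given an upper semicontinuous function `u` bounded from above, `ε, δ > 0` and a point `x̄`
with `u x̄ > sup u - ε`, there is a point `x` with `u x ≥ u x̄`, `d(x, x̄) ≤ δ`, and
`u y ≤ u x + (ε/δ) d(x, y)` for all `y`. -/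
theorem ekeland_principle_localized {X : Type*} [MetricSpace X] [CompleteSpace X]
    (u : X → ℝ) (hu : UpperSemicontinuous u) (hbdd : BddAbove (Set.range u))
    (ε δ : ℝ) (hε : 0 < ε) (hδ : 0 < δ)
    (xbar : X) (hxbar : (⨆ y, u y) - ε < u xbar) :
    ∃ x : X, u xbar ≤ u x ∧ dist x xbar ≤ δ ∧
      ∀ y : X, u y ≤ u x + (ε / δ) * dist x y := by
  have hc : 0 < ε / δ := div_pos hε hδ
  obtain ⟨x, hx, hx_max⟩ := exists_mem_ekelandSet_forall_le hu hbdd hc xbar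
  refine ⟨x, le_of_mem_ekelandSet hc.le hx, ?_, hx_max⟩
  have hgain : ε / δ * dist xbar x < ε := by
    have hx' : u xbar + ε / δ * dist xbar x ≤ u x := hx
    linarith [le_ciSup hbdd x]
  rw [div_mul_eq_mul_div, div_lt_iff₀ hδ, mul_lt_mul_iff_right₀ hε] at hgain
  exact (dist_comm x xbar ▸ hgain).le
end

section
/- Let E be a nonempty real Banach space and let u : E → ℝ be a differentiable function that is bounded from above. Then for every ε > 0 there exists a point x ∈ E such that u(x) > sup_E u − ε and ‖Du(x)‖ ≤ ε, where Du(x) denotes the Fréchet derivative of u at x. In particular, there exists a sequence (x_k) with u(x_k) → sup_E u and ‖Du(x_k)‖ → 0. -/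
/-!
Ekeland's principle: for `ε > 0`, start at a point `x₀` with `u x₀ > sup u - ε` and choose
`x (n + 1)` almost maximizing `u` on the closed set of points `y` with
`u (x n) + ε * dist y (x n) ≤ u y`. These sets are nested, the values `u (x n)` increase to a
finite limit, and `ε * dist (x m) (x n)` is bounded by their increments, so `x n` is Cauchy; its
limit `z` satisfies `u x₀ ≤ u z` and `u y ≤ u z + ε * ‖y - z‖` for every `y`. Then `z` is a
maximum of `t ↦ u (z + t • v) - ε * t * ‖v‖` on `t ≥ 0`, and Fermat's rule gives
`Du(z) v ≤ ε * ‖v‖` for every direction `v`.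
-/

open Filter Set Topology

theorem exists_mem_forall_lt_add_of_bddAbove_image {α : Type*} {u : α → ℝ} {s : Set α}
    (hs : s.Nonempty) (hbdd : BddAbove (u '' s)) {δ : ℝ} (hδ : 0 < δ) :
    ∃ y ∈ s, ∀ z ∈ s, u z < u y + δ := by
  obtain ⟨_, ⟨y, hy, rfl⟩, hlt⟩ := exists_lt_of_lt_csSup (hs.image u) (sub_lt_self _ hδ)
  exact ⟨y, hy, fun z hz => by linarith [le_csSup hbdd (mem_image_of_mem u hz)]⟩

namespace Ekeland

variable {X : Type*} [MetricSpace X] {u : X → ℝ} {ε : ℝ} {x y : X}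

def improvingSet (u : X → ℝ) (ε : ℝ) (x : X) : Set X :=
  {y | u x + ε * dist y x ≤ u y}

theorem self_mem_improvingSet (x : X) : x ∈ improvingSet u ε x := by
  simp [improvingSet]

theorem le_of_mem_improvingSet (hε : 0 ≤ ε) (hy : y ∈ improvingSet u ε x) : u x ≤ u y := by
  have : u x + ε * dist y x ≤ u y := hy
  linarith [mul_nonneg hε (dist_nonneg (x := y) (y := x))]

theorem dist_le_of_mem_improvingSet (hε : 0 < ε) (hy : y ∈ improvingSet u ε x) :
    dist y x ≤ (u y - u x) / ε := by
  have : u x + ε * dist y x ≤ u y := hy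
  rw [le_div_iff₀ hε]
  linarith

theorem improvingSet_subset (hε : 0 ≤ ε) (hy : y ∈ improvingSet u ε x) :
    improvingSet u ε y ⊆ improvingSet u ε x := fun z (hz : u y + ε * dist z y ≤ u z) => by
  have hy : u x + ε * dist y x ≤ u y := hy
  show u x + ε * dist z x ≤ u z
  linarith [mul_le_mul_of_nonneg_left (dist_triangle z y x) hε]

theorem isClosed_improvingSet (hu : UpperSemicontinuous u) (x : X) :
    IsClosed (improvingSet u ε x) := by
  have hcont : Continuous fun y => -(ε * dist y x) := by fun_prop
  convert (hu.add hcont.upperSemicontinuous).isClosed_preimage (u x) using 1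
  ext y
  simp only [improvingSet, mem_ofPred_eq, mem_preimage, mem_Ici]
  constructor <;> intro h <;> linarith

theorem exists_almostMaximizing_seq (hbdd : BddAbove (range u)) (x₀ : X) :
    ∃ x : ℕ → X, x 0 = x₀ ∧ (∀ n, x (n + 1) ∈ improvingSet u ε (x n)) ∧
      ∀ n, ∀ y ∈ improvingSet u ε (x n), u y < u (x (n + 1)) + 1 / (n + 1) := by
  choose next hnext using fun (n : ℕ) (x : X) =>
    exists_mem_forall_lt_add_of_bddAbove_image ⟨x, self_mem_improvingSet (ε := ε) x⟩
      (hbdd.mono (image_subset_range u _)) (Nat.one_div_pos_of_nat (n := n))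
  exact ⟨fun n => Nat.rec x₀ next n, rfl, fun n => (hnext n _).1, fun n => (hnext n _).2⟩

theorem exists_le_forall_le_add_dist [CompleteSpace X] (hu : UpperSemicontinuous u)
    (hbdd : BddAbove (range u)) (hε : 0 < ε) (x₀ : X) :
    ∃ z, u x₀ ≤ u z ∧ ∀ y, u y ≤ u z + ε * dist y z := by
  obtain ⟨x, rfl, hstep, halmost⟩ := exists_almostMaximizing_seq (ε := ε) hbdd x₀
  have hchain (n : ℕ) : ∀ m ≥ n, x m ∈ improvingSet u ε (x n) :=
    Nat.le_induction (self_mem_improvingSet _)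
      fun m _ ih => improvingSet_subset hε.le ih (hstep m)
  have hmono : Monotone (u ∘ x) := fun n m hnm =>
    le_of_mem_improvingSet (u := u) hε.le (hchain n m hnm)
  have hbdd_seq : BddAbove (range (u ∘ x)) := hbdd.mono (range_comp_subset_range x u)
  set L := ⨆ n, u (x n)
  have hL : Tendsto (u ∘ x) atTop (𝓝 L) := tendsto_atTop_ciSup hmono hbdd_seq
  have hcauchy : CauchySeq x := by
    refine cauchySeq_of_le_tendsto_0' (fun n => (L - u (x n)) / ε) (fun n m hnm => ?_) ?_
    · rw [dist_comm]
      refine (dist_le_of_mem_improvingSet hε (hchain n m hnm)).trans ?_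
      gcongr
      exact le_ciSup hbdd_seq m
    · simpa using (hL.const_sub L).div_const ε
  obtain ⟨z, hz⟩ := cauchySeq_tendsto_of_complete hcauchy
  have hzS (n : ℕ) : z ∈ improvingSet u ε (x n) :=
    (isClosed_improvingSet hu _).mem_of_tendsto hz (eventually_atTop.2 ⟨n, hchain n⟩)
  refine ⟨z, le_of_mem_improvingSet hε.le (hzS 0), fun y => ?_⟩
  by_contra! hy
  have hyS (n : ℕ) : y ∈ improvingSet u ε (x n) := improvingSet_subset hε.le (hzS n) hy.le
  have hyz : u y ≤ u z := by
    have hlim := tendsto_one_div_add_atTop_nhds_zero_nat.const_add (u z)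
    rw [add_zero] at hlim
    refine ge_of_tendsto hlim (Eventually.of_forall fun n => ?_)
    linarith [halmost n y (hyS n), le_of_mem_improvingSet hε.le (hzS (n + 1))]
  linarith [mul_nonneg hε.le (dist_nonneg (x := y) (y := z))]

end Ekeland

section Normed

variable {E : Type*} [NormedAddCommGroup E] [NormedSpace ℝ E]

theorem ContinuousLinearMap.norm_le_of_forall_apply_le {f : E →L[ℝ] ℝ} {c : ℝ} (hc : 0 ≤ c)
    (h : ∀ v, f v ≤ c * ‖v‖) : ‖f‖ ≤ c :=
  f.opNorm_le_bound hc fun v => by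
    have hneg := h (-v)
    rw [map_neg, norm_neg] at hneg
    exact abs_le.2 ⟨by linarith, h v⟩

theorem HasFDerivAt.norm_le_of_eventually_le_add_norm_sub {u : E → ℝ} {f : E →L[ℝ] ℝ} {x : E}
    {ε : ℝ} (hf : HasFDerivAt u f x) (hε : 0 ≤ ε)
    (h : ∀ᶠ y in 𝓝 x, u y ≤ u x + ε * ‖y - x‖) : ‖f‖ ≤ ε := by
  refine f.norm_le_of_forall_apply_le hε fun v => ?_
  let g : ℝ → ℝ := fun t => u (x + t • v) - t * (ε * ‖v‖)
  have hline : HasDerivAt (fun t : ℝ => x + t • v) v 0 := by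
    simpa using ((hasDerivAt_id (0 : ℝ)).smul_const v).const_add x
  have hg : HasDerivAt g (f v - ε * ‖v‖) 0 := by
    have hu : HasFDerivAt u f (x + (0 : ℝ) • v) := by simpa using hf
    exact (hu.comp_hasDerivAt 0 hline).sub (hasDerivAt_mul_const (ε * ‖v‖))
  have hmax : IsLocalMaxOn g (Ici 0) 0 := by
    have hh : ∀ᶠ t in 𝓝 (0 : ℝ), u (x + t • v) ≤ u x + ε * ‖x + t • v - x‖ :=
      hline.continuousAt.tendsto.eventually (by simpa using h)
    filter_upwards [nhdsWithin_le_nhds hh, self_mem_nhdsWithin] with t ht (ht0 : 0 ≤ t)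
    simp only [g, add_sub_cancel_left, norm_smul, Real.norm_of_nonneg ht0, zero_smul, add_zero,
      zero_mul, sub_zero] at ht ⊢
    linarith
  have hright : ∀ᶠ t in 𝓝[>] (0 : ℝ), t ∈ Ici 0 :=
    eventually_nhdsWithin_of_forall fun _ => mem_Ici_of_Ioi
  have hone : (1 : ℝ) ∈ posTangentConeAt (Ici 0) 0 :=
    one_mem_posTangentConeAt_iff_frequently.2 hright.frequently
  simpa using hmax.hasFDerivWithinAt_nonpos hg.hasFDerivAt.hasFDerivWithinAt hone

theorem exists_sub_lt_and_norm_fderiv_le [CompleteSpace E] [Nonempty E] {u : E → ℝ}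
    (hdiff : Differentiable ℝ u) (hbdd : BddAbove (range u)) {ε : ℝ} (hε : 0 < ε) :
    ∃ x, (⨆ y, u y) - ε < u x ∧ ‖fderiv ℝ u x‖ ≤ ε := by
  obtain ⟨x₀, hx₀⟩ := exists_lt_of_lt_ciSup (sub_lt_self (⨆ y, u y) hε)
  obtain ⟨x, hx₀x, hmax⟩ :=
    Ekeland.exists_le_forall_le_add_dist hdiff.continuous.upperSemicontinuous hbdd hε x₀
  refine ⟨x, hx₀.trans_le hx₀x, (hdiff x).hasFDerivAt.norm_le_of_eventually_le_add_norm_sub hε.le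
    (Eventually.of_forall fun y => ?_)⟩
  simpa [dist_eq_norm] using hmax y

end Normed

/-- On a (nonempty) real Banach space, a differentiable function bounded from above admits,
for every `ε > 0`, a point where it is `ε`-close to its supremum and where the norm of its
Fréchet derivative is at most `ε`; in particular there is a sequence `x k` along which `u`
tends to its supremum and the derivative norms tend to `0`. -/
theorem banach_ekeland_almost_critical {E : Type*} [NormedAddCommGroup E] [NormedSpace ℝ E]
    [CompleteSpace E] [Nonempty E]
    (u : E → ℝ) (hdiff : Differentiable ℝ u) (hbdd : BddAbove (Set.range u)) :
    (∀ ε : ℝ, 0 < ε → ∃ x : E, (⨆ y, u y) - ε < u x ∧ ‖fderiv ℝ u x‖ ≤ ε) ∧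
      ∃ x : ℕ → E,
        Filter.Tendsto (fun k => u (x k)) Filter.atTop (nhds (⨆ y, u y)) ∧
        Filter.Tendsto (fun k => ‖fderiv ℝ u (x k)‖) Filter.atTop (nhds 0) := by
  refine ⟨fun ε hε => exists_sub_lt_and_norm_fderiv_le hdiff hbdd hε, ?_⟩
  choose x hxu hxd using fun k : ℕ =>
    exists_sub_lt_and_norm_fderiv_le hdiff hbdd (Nat.one_div_pos_of_nat (n := k))
  refine ⟨x, ?_, squeeze_zero (fun k => norm_nonneg _) hxd tendsto_one_div_add_atTop_nhds_zero_nat⟩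
  have hlow := tendsto_one_div_add_atTop_nhds_zero_nat.const_sub (⨆ y, u y)
  rw [sub_zero] at hlow
  exact tendsto_of_tendsto_of_tendsto_of_le_of_le hlow tendsto_const_nhds (fun k => (hxu k).le)
    fun k => le_ciSup hbdd (x k)
end

section
/- Let G be a topological abelian group (written additively) and F ⊆ G a subset satisfying F = closure(interior F). Define the Harvey–Lawson dual of F by F̃ := {x ∈ G : −x ∉ interior F}. Then F̃ also satisfies F̃ = closure(interior F̃). -/
theorem compl_interior_eq_closure_interior_compl {X : Type*} [TopologicalSpace X] {s : Set X}
    (hs : s = closure (interior s)) :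
    (interior s)ᶜ = closure (interior (interior s)ᶜ) := by
  rw [interior_compl, ← hs, closure_compl]

theorem Homeomorph.preimage_eq_closure_interior_preimage {X Y : Type*} [TopologicalSpace X]
    [TopologicalSpace Y] (e : X ≃ₜ Y) {t : Set Y} (ht : t = closure (interior t)) :
    e ⁻¹' t = closure (interior (e ⁻¹' t)) := by
  rw [← e.preimage_interior, ← e.preimage_closure, ← ht]

/-- The topological condition (T) of being the closure of one's own interior is preserved
under Harvey–Lawson duality `F̃ = {x | -x ∉ interior F}`. -/
theorem hl_dual_preserves_T {G : Type*} [TopologicalSpace G] [AddCommGroup G]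
    [IsTopologicalAddGroup G] (F : Set G) (hF : F = closure (interior F)) :
    {x : G | -x ∉ interior F} =
      closure (interior {x : G | -x ∉ interior F}) :=
  (Homeomorph.neg G).preimage_eq_closure_interior_preimage
    (compl_interior_eq_closure_interior_compl hF)
end

section
/- Let V be a real normed vector space and let ξ : ℝ → ℝ be continuous, odd and strictly decreasing (so ξ(0) = 0 and ξ < 0 on (0, ∞)). Consider E_ξ = {(r, p) ∈ ℝ × V : ‖p‖ ≤ ξ(r)}. Then its Harvey–Lawson dual, defined by Ẽ_ξ := {(r, p) ∈ ℝ × V : (−r, −p) ∉ interior E_ξ}, equals {(r, p) ∈ ℝ × V : ‖p‖ ≥ ξ(−r)}. -/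
/-- For `ξ : ℝ → ℝ` continuous, odd and strictly decreasing, the Harvey–Lawson dual of
`E_ξ = {(r, p) : ‖p‖ ≤ ξ r}` in `ℝ × V` is `{(r, p) : ‖p‖ ≥ ξ (-r)}`. -/
theorem eikonal_xi_dual {V : Type*} [NormedAddCommGroup V] [NormedSpace ℝ V]
    (ξ : ℝ → ℝ) (hcont : Continuous ξ) (hodd : ∀ r : ℝ, ξ (-r) = -ξ r)
    (hanti : StrictAnti ξ) :
    {x : ℝ × V | (-x.1, -x.2) ∉ interior {y : ℝ × V | ‖y.2‖ ≤ ξ y.1}} =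
      {x : ℝ × V | ξ (-x.1) ≤ ‖x.2‖} := by
  ext ⟨r, p⟩
  simp only [Set.mem_setOf_eq]
  constructor
  · intro h
    by_contra hlt
    push_neg at hlt
    apply h
    have hopen : IsOpen {y : ℝ × V | ‖y.2‖ < ξ y.1} :=
      isOpen_lt (continuous_norm.comp continuous_snd) (hcont.comp continuous_fst)
    have hsub : {y : ℝ × V | ‖y.2‖ < ξ y.1} ⊆ {y : ℝ × V | ‖y.2‖ ≤ ξ y.1} :=
      fun y (hy : ‖y.2‖ < ξ y.1) => le_of_lt hy
    exact interior_maximal hsub hopen (by simpa [norm_neg] using hlt)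
  · intro h hmem
    have hle := interior_subset hmem
    simp only [Set.mem_setOf_eq, norm_neg] at hle
    have heq : ‖p‖ = ξ (-r) := le_antisymm hle h
    have hnb : {y : ℝ × V | ‖y.2‖ ≤ ξ y.1} ∈ nhds ((-r, -p) : ℝ × V) :=
      mem_interior_iff_mem_nhds.mp hmem
    have htend : Filter.Tendsto (fun t : ℝ => ((-r + t, -p) : ℝ × V))
        (nhds 0) (nhds (-r, -p)) := by
      apply Filter.Tendsto.prodMk_nhds
      · simpa using ((continuous_add_left (-r)).tendsto (0 : ℝ))
      · exact tendsto_const_nhds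
    have hev : ∀ᶠ t in nhds (0 : ℝ), ‖(-p : V)‖ ≤ ξ (-r + t) :=
      htend.eventually hnb
    have hev' : ∀ᶠ t in nhdsWithin (0 : ℝ) (Set.Ioi 0), ‖(-p : V)‖ ≤ ξ (-r + t) :=
      hev.filter_mono nhdsWithin_le_nhds
    obtain ⟨t, ht, htpos⟩ := (hev'.and self_mem_nhdsWithin).exists
    have : ξ (-r + t) < ξ (-r) := hanti (by linarith [htpos])
    rw [norm_neg, heq] at ht
    linarith
end

section
/- Let n ≥ 1 and let f : ℝ → ℝ be continuous, odd and strictly increasing (so f(0) = 0). In the space ℝ × Sym(n), where Sym(n) denotes the real vector space of symmetric n × n real matrices with its natural topology, consider F = {(r, A) : f(r) ≤ trace(A)}. Then F is self-dual: its Harvey–Lawson dual F̃ := {(r, A) : (−r, −A) ∉ interior F} equals F. -/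
/-!
Write `F = {0 ≤ g}` with `g (r, A) = tr A - f r`, which is continuous and odd. Since `f` is
strictly increasing, moving `r` slightly to the right strictly lowers `g`, so `g` has no local
minimum and the interior of `F` is exactly `{0 < g}`. Oddness of `g` then turns
`-x ∉ {0 < g}` into `0 ≤ g x`.
-/

/-- `SymMat n` is the real vector space of symmetric `n × n` real matrices (self-adjoint
matrices, since `star` is transposition for real matrices), with its natural topology. -/
abbrev SymMat (n : ℕ) : Type := ↥(selfAdjoint (Matrix (Fin n) (Fin n) ℝ))

open Set Filter Topology

def harveyLawsonDual {X : Type*} [TopologicalSpace X] [Neg X] (F : Set X) : Set X :=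
  {x | -x ∉ interior F}

theorem interior_setOf_nonneg_eq {X : Type*} [TopologicalSpace X] {g : X → ℝ}
    (hg : Continuous g) (hmin : ∀ x, x ∈ closure {y | g y < g x}) :
    interior {x | 0 ≤ g x} = {x | 0 < g x} := by
  apply Subset.antisymm
  · intro x hx
    by_contra hgx
    rw [mem_ofPred_eq, not_lt] at hgx
    obtain ⟨y, hyF, hyx⟩ := mem_closure_iff.mp (hmin x) _ isOpen_interior hx
    have hgy : y ∈ {x | 0 ≤ g x} := interior_subset hyF
    exact (lt_of_lt_of_le hyx hgx).not_ge hgy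
  · exact interior_maximal (fun _ hx => le_of_lt (α := ℝ) hx) (isOpen_lt continuous_const hg)

theorem harveyLawsonDual_setOf_nonneg {X : Type*} [TopologicalSpace X] [Neg X] {g : X → ℝ}
    (hg : Continuous g) (hodd : ∀ x, g (-x) = -g x)
    (hmin : ∀ x, x ∈ closure {y | g y < g x}) :
    harveyLawsonDual {x | 0 ≤ g x} = {x | 0 ≤ g x} := by
  ext x
  simp [harveyLawsonDual, interior_setOf_nonneg_eq hg hmin, hodd]

theorem mem_closure_setOf_sub_lt {V : Type*} [TopologicalSpace V] {f : ℝ → ℝ} (τ : V → ℝ)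
    (hmono : StrictMono f) (x : ℝ × V) :
    x ∈ closure {y : ℝ × V | τ y.2 - f y.1 < τ x.2 - f x.1} := by
  have hpath : Tendsto (fun t : ℝ => (x.1 + t, x.2)) (𝓝[>] 0) (𝓝 x) := by
    have : Continuous fun t : ℝ => (x.1 + t, x.2) := by fun_prop
    simpa using (this.tendsto 0).mono_left nhdsWithin_le_nhds
  refine mem_closure_of_tendsto hpath (eventually_nhdsWithin_of_forall fun t (ht : 0 < t) => ?_)
  simpa using hmono (lt_add_of_pos_right x.1 ht)

theorem harveyLawsonDual_setOf_le_eq {V : Type*} [TopologicalSpace V] [Neg V]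
    {f : ℝ → ℝ} {τ : V → ℝ} (hf : Continuous f) (hfodd : ∀ r, f (-r) = -f r)
    (hmono : StrictMono f) (hτ : Continuous τ) (hτodd : ∀ v, τ (-v) = -τ v) :
    harveyLawsonDual {y : ℝ × V | f y.1 ≤ τ y.2} = {y : ℝ × V | f y.1 ≤ τ y.2} := by
  have hF : {y : ℝ × V | f y.1 ≤ τ y.2} = {y | 0 ≤ τ y.2 - f y.1} := by
    simp only [sub_nonneg]
  rw [hF]
  refine harveyLawsonDual_setOf_nonneg (by fun_prop) (fun y => ?_)
    (mem_closure_setOf_sub_lt τ hmono)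
  simp only [Prod.fst_neg, Prod.snd_neg, hfodd, hτodd]
  ring

theorem trace_subequation_selfdual_general (n : ℕ) (f : ℝ → ℝ)
    (hcont : Continuous f) (hodd : ∀ r : ℝ, f (-r) = -f r) (hmono : StrictMono f) :
    {x : ℝ × SymMat n | (-x.1, -x.2) ∉
        interior {y : ℝ × SymMat n | f y.1 ≤ Matrix.trace (y.2 : Matrix (Fin n) (Fin n) ℝ)}} =
      {y : ℝ × SymMat n | f y.1 ≤ Matrix.trace (y.2 : Matrix (Fin n) (Fin n) ℝ)} :=
  harveyLawsonDual_setOf_le_eq hcont hodd hmono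
    (Continuous.matrix_trace continuous_subtype_val) fun _ => Matrix.trace_neg _

/-- For `f : ℝ → ℝ` continuous, odd and strictly increasing, the subequation
`F = {(r, A) : f r ≤ tr A}` in `ℝ × SymMat n` is self-dual: its Harvey–Lawson dual
`F̃ = {(r, A) : (-r, -A) ∉ interior F}` equals `F`. -/
theorem trace_subequation_selfdual (n : ℕ) (hn : 1 ≤ n) (f : ℝ → ℝ)
    (hcont : Continuous f) (hodd : ∀ r : ℝ, f (-r) = -f r) (hmono : StrictMono f) :
    {x : ℝ × SymMat n | (-x.1, -x.2) ∉
        interior {y : ℝ × SymMat n | f y.1 ≤ Matrix.trace (y.2 : Matrix (Fin n) (Fin n) ℝ)}} =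
      {y : ℝ × SymMat n | f y.1 ≤ Matrix.trace (y.2 : Matrix (Fin n) (Fin n) ℝ)} :=
  trace_subequation_selfdual_general n f hcont hodd hmono
end

section
/- Let n ≥ 1 and let f : ℝ → ℝ be continuous, odd and strictly increasing. In ℝ × Sym(n), where Sym(n) is the space of symmetric n × n real matrices, consider F = {(r, A) : A − f(r)·I is positive semidefinite} (equivalently, the smallest eigenvalue λ₁(A) is ≥ f(r)). Then its Harvey–Lawson dual F̃ := {(r, A) : (−r, −A) ∉ interior F} equals {(r, A) : there exists a nonzero vector v ∈ ℝⁿ with f(r)·‖v‖² ≤ vᵀAv} (equivalently, the largest eigenvalue λ_n(A) is ≥ f(r)). -/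
open Matrix

lemma quad_cont (n : ℕ) (f : ℝ → ℝ) (hcont : Continuous f) :
    Continuous (fun z : (ℝ × SymMat n) × (Fin n → ℝ) =>
      z.2 ⬝ᵥ (((z.1.2 : Matrix (Fin n) (Fin n) ℝ) - f z.1.1 • 1) *ᵥ z.2)) := by
  simp only [dotProduct, Matrix.mulVec, dotProduct]
  apply continuous_finset_sum
  intro i _
  apply Continuous.mul (continuous_apply i |>.comp continuous_snd)
  apply continuous_finset_sum
  intro j _
  apply Continuous.mul _ ((continuous_apply j).comp continuous_snd)
  have h1 : Continuous (fun z : (ℝ × SymMat n) × (Fin n → ℝ) =>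
      (z.1.2 : Matrix (Fin n) (Fin n) ℝ) i j) :=
    (continuous_apply j).comp <| (continuous_apply i).comp <|
      (continuous_subtype_val.comp <| continuous_snd.comp continuous_fst : Continuous (fun z : (ℝ × SymMat n) × (Fin n → ℝ) =>
        (z.1.2 : Matrix (Fin n) (Fin n) ℝ)))
  have h2 : Continuous (fun z : (ℝ × SymMat n) × (Fin n → ℝ) =>
      f z.1.1 * (1 : Matrix (Fin n) (Fin n) ℝ) i j) :=
    ((hcont.comp <| continuous_fst.comp continuous_fst).mul continuous_const)
  simpa [Matrix.sub_apply, Matrix.smul_apply, smul_eq_mul, Pi.sub_def] using h1.sub h2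

/-- For `f : ℝ → ℝ` continuous, odd and strictly increasing, the Harvey–Lawson dual of
`F = {(r, A) : A - f r • I is positive semidefinite}` (i.e. `λ₁(A) ≥ f r`) in `ℝ × SymMat n`
is `{(r, A) : ∃ v ≠ 0, f r · ‖v‖² ≤ vᵀ A v}` (i.e. `λ_n(A) ≥ f r`). -/
theorem smallest_eigenvalue_dual (n : ℕ) (hn : 1 ≤ n) (f : ℝ → ℝ)
    (hcont : Continuous f) (hodd : ∀ r : ℝ, f (-r) = -f r) (hmono : StrictMono f) :
    {x : ℝ × SymMat n | (-x.1, -x.2) ∉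
        interior {y : ℝ × SymMat n |
          ((y.2 : Matrix (Fin n) (Fin n) ℝ) - f y.1 • (1 : Matrix (Fin n) (Fin n) ℝ)).PosSemidef}} =
      {x : ℝ × SymMat n | ∃ v : Fin n → ℝ, v ≠ 0 ∧
        f x.1 * (v ⬝ᵥ v) ≤ v ⬝ᵥ ((x.2 : Matrix (Fin n) (Fin n) ℝ) *ᵥ v)} := by
  set F : Set (ℝ × SymMat n) := {y : ℝ × SymMat n |
    ((y.2 : Matrix (Fin n) (Fin n) ℝ) - f y.1 • (1 : Matrix (Fin n) (Fin n) ℝ)).PosSemidef}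
  ext x
  obtain ⟨r, A⟩ := x
  simp only [Set.mem_setOf_eq]
  constructor
  · -- LHS → RHS, by contrapositive
    intro h
    by_contra hc
    push_neg at hc
    apply h
    rw [mem_interior_iff_mem_nhds]
    -- for every unit vector u, the quadratic form of (-A) - f(-r)•1 at u is positive,
    -- eventually in a neighborhood
    have key : ∀ᶠ p : ℝ × SymMat n in nhds (-r, -A),
        ∀ u ∈ Metric.sphere (0 : Fin n → ℝ) 1,
          0 < u ⬝ᵥ (((p.2 : Matrix (Fin n) (Fin n) ℝ) - f p.1 • 1) *ᵥ u) := by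
      apply (isCompact_sphere (0 : Fin n → ℝ) 1).eventually_forall_of_forall_eventually
      intro u hu
      have hu0 : u ≠ 0 := by
        intro h0
        simp [h0] at hu
      have hpos : 0 < u ⬝ᵥ ((((-A : SymMat n) : Matrix (Fin n) (Fin n) ℝ)
          - f (-r) • 1) *ᵥ u) := by
        have h1 := hc u hu0
        have : (((-A : SymMat n) : Matrix (Fin n) (Fin n) ℝ) - f (-r) • 1)
            = -((A : Matrix (Fin n) (Fin n) ℝ)) + f r • 1 := by
          push_cast
          rw [hodd, neg_smul, sub_neg_eq_add]
        rw [this]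
        have : u ⬝ᵥ ((-((A : Matrix (Fin n) (Fin n) ℝ)) + f r • 1) *ᵥ u)
            = f r * (u ⬝ᵥ u) - u ⬝ᵥ ((A : Matrix (Fin n) (Fin n) ℝ) *ᵥ u) := by
          rw [Matrix.add_mulVec, Matrix.neg_mulVec, Matrix.smul_mulVec,
            Matrix.one_mulVec, dotProduct_add, dotProduct_neg,
            dotProduct_smul, smul_eq_mul]
          ring
        rw [this]
        linarith
      have := (quad_cont n f hcont).continuousAt (x := ((-r, -A), u))
      exact continuousAt_const.eventually_lt this hpos
    -- now upgrade positivity on the sphere to PosSemidef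
    refine key.mono ?_
    rintro ⟨s, B⟩ hp
    refine Matrix.PosSemidef.of_dotProduct_mulVec_nonneg ?_ ?_
    · have hB : (B : Matrix (Fin n) (Fin n) ℝ).IsHermitian := B.prop
      exact hB.sub (by
        rw [Matrix.IsHermitian, Matrix.conjTranspose_smul]
        simp [Matrix.isHermitian_one.eq])
    · intro v
      rcases eq_or_ne v 0 with rfl | hv
      · simp
      · have hnv : ‖v‖ ≠ 0 := norm_ne_zero_iff.mpr hv
        set u : Fin n → ℝ := ‖v‖⁻¹ • v with hu_def
        have huu : u ∈ Metric.sphere (0 : Fin n → ℝ) 1 := by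
          simp [hu_def, norm_smul, abs_of_nonneg (inv_nonneg.mpr (norm_nonneg v)),
            inv_mul_cancel₀ hnv]
        have hq := le_of_lt (hp u huu)
        set M := ((B : Matrix (Fin n) (Fin n) ℝ) - f s • 1)
        have hscale : ∀ (c : ℝ) (w : Fin n → ℝ),
            (c • w) ⬝ᵥ (M *ᵥ (c • w)) = c * (c * (w ⬝ᵥ (M *ᵥ w))) := by
          intro c w
          rw [Matrix.mulVec_smul, smul_dotProduct, dotProduct_smul]
          simp [smul_eq_mul]
        have hv_eq : v = ‖v‖ • u := by
          rw [hu_def, smul_smul, mul_inv_cancel₀ hnv, one_smul]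
        have : 0 ≤ v ⬝ᵥ (M *ᵥ v) := by
          rw [hv_eq, hscale]
          positivity
        simpa [star_trivial] using this
  · -- RHS → LHS
    rintro ⟨v, hv, hle⟩ hmem
    rw [mem_interior_iff_mem_nhds] at hmem
    have hcont' : Continuous (fun s : ℝ => ((s, -A) : ℝ × SymMat n)) :=
      continuous_id.prodMk continuous_const
    have hnr : (fun s : ℝ => ((s, -A) : ℝ × SymMat n)) ⁻¹' F ∈ nhds (-r) := by
      apply hcont'.continuousAt.preimage_mem_nhds
      simpa using hmem
    rw [Metric.mem_nhds_iff] at hnr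
    obtain ⟨ε, hε, hball⟩ := hnr
    have hmem2 : ((-r + ε / 2, -A) : ℝ × SymMat n) ∈ F := by
      apply hball
      rw [Metric.mem_ball, Real.dist_eq]
      rw [show (-r + ε / 2 - -r) = ε / 2 by ring, abs_of_pos (by linarith)]
      linarith
    have hq := Matrix.PosSemidef.dotProduct_mulVec_nonneg hmem2 v
    have hvv : (0 : ℝ) < v ⬝ᵥ v := by
      have h0 : (0:ℝ) ≤ v ⬝ᵥ v := Finset.sum_nonneg fun i _ => mul_self_nonneg _
      rcases lt_or_eq_of_le h0 with h | h
      · exact h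
      · exact absurd (dotProduct_self_eq_zero.mp h.symm) hv
    have hlt : f (r - ε / 2) < f r := hmono (by linarith)
    have hcompute : v ⬝ᵥ ((((-A : SymMat n) : Matrix (Fin n) (Fin n) ℝ)
        - f (-r + ε / 2) • 1) *ᵥ v)
        = f (r - ε / 2) * (v ⬝ᵥ v) - v ⬝ᵥ ((A : Matrix (Fin n) (Fin n) ℝ) *ᵥ v) := by
      have hcast : (((-A : SymMat n) : Matrix (Fin n) (Fin n) ℝ)
          - f (-r + ε / 2) • 1)
          = -((A : Matrix (Fin n) (Fin n) ℝ)) + f (r - ε / 2) • 1 := by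
        push_cast
        have : (-r + ε / 2 : ℝ) = -(r - ε / 2) := by ring
        rw [this, hodd, neg_smul, sub_neg_eq_add]
      rw [hcast, Matrix.add_mulVec, Matrix.neg_mulVec, Matrix.smul_mulVec,
        Matrix.one_mulVec, dotProduct_add, dotProduct_neg,
        dotProduct_smul, smul_eq_mul]
      ring
    have hq' : 0 ≤ f (r - ε / 2) * (v ⬝ᵥ v)
        - v ⬝ᵥ ((A : Matrix (Fin n) (Fin n) ℝ) *ᵥ v) := by
      rw [← hcompute]
      simpa [star_trivial] using hq
    nlinarith
end

section
/- Let 1 ≤ k ≤ n and let f : ℝ → ℝ be continuous, odd and strictly increasing. In ℝ × Sym(n), where Sym(n) is the space of symmetric n × n real matrices, consider the k-partial-trace subequation F = {(r, A) : for every orthonormal family e₁, …, e_k in ℝⁿ, Σᵢ eᵢᵀA eᵢ ≥ f(r)} (equivalently λ₁(A) + ⋯ + λ_k(A) ≥ f(r)). Then its Harvey–Lawson dual F̃ := {(r, A) : (−r, −A) ∉ interior F} equals {(r, A) : there exists an orthonormal family e₁, …, e_k in ℝⁿ with Σᵢ eᵢᵀA eᵢ ≥ f(r)} (equivalently λ_{n−k+1}(A)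 + ⋯ + λ_n(A) ≥ f(r)). -/
open Matrix Topology Filter

/-- A family `e : Fin k → (Fin n → ℝ)` is orthonormal if `eᵢᵀ eⱼ = δᵢⱼ`. -/
def IsOrthonormalFamily {k n : ℕ} (e : Fin k → (Fin n → ℝ)) : Prop :=
  ∀ i j : Fin k, e i ⬝ᵥ e j = if i = j then (1 : ℝ) else 0

/-- The set of orthonormal families is compact (closed and contained in a cube). -/
lemma isCompact_onfam (k n : ℕ) :
    IsCompact {e : Fin k → Fin n → ℝ | IsOrthonormalFamily e} := by
  have hsub : {e : Fin k → Fin n → ℝ | IsOrthonormalFamily e} ⊆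
      Set.Icc (fun _ _ => (-1 : ℝ)) (fun _ _ => (1 : ℝ)) := by
    intro e he
    have habs : ∀ i j, |e i j| ≤ 1 := by
      intro i j
      have h1 : e i ⬝ᵥ e i = 1 := by simpa using he i i
      have hle : e i j * e i j ≤ ∑ l, e i l * e i l :=
        Finset.single_le_sum (f := fun l => e i l * e i l)
          (fun l _ => mul_self_nonneg _) (Finset.mem_univ j)
      have : e i j ^ 2 ≤ 1 := by
        rw [sq]; calc e i j * e i j ≤ ∑ l, e i l * e i l := hle
          _ = 1 := h1
      exact (sq_le_one_iff_abs_le_one _).mp this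
    constructor
    · intro i; intro j; exact neg_le_of_abs_le (habs i j)
    · intro i; intro j; exact le_of_abs_le (habs i j)
  have hclosed : IsClosed {e : Fin k → Fin n → ℝ | IsOrthonormalFamily e} := by
    have : {e : Fin k → Fin n → ℝ | IsOrthonormalFamily e} =
        ⋂ i, ⋂ j, {e : Fin k → Fin n → ℝ | e i ⬝ᵥ e j = if i = j then (1 : ℝ) else 0} := by
      ext e; simp [IsOrthonormalFamily, Set.mem_iInter]
    rw [this]
    refine isClosed_iInter fun i => isClosed_iInter fun j =>
      isClosed_eq ?_ continuous_const
    exact Continuous.dotProduct (continuous_apply i) (continuous_apply j)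
  exact (isCompact_Icc).of_isClosed_subset hclosed hsub

lemma cont_Q (k n : ℕ) :
    Continuous (fun p : (ℝ × SymMat n) × (Fin k → Fin n → ℝ) =>
      ∑ i : Fin k, p.2 i ⬝ᵥ ((p.1.2 : Matrix (Fin n) (Fin n) ℝ) *ᵥ p.2 i)) := by
  refine continuous_finset_sum _ fun i _ => ?_
  have hA : Continuous (fun p : (ℝ × SymMat n) × (Fin k → Fin n → ℝ) =>
      (p.1.2 : Matrix (Fin n) (Fin n) ℝ)) :=
    continuous_subtype_val.comp (continuous_snd.comp continuous_fst)
  have he : Continuous (fun p : (ℝ × SymMat n) × (Fin k → Fin n → ℝ) => p.2 i) :=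
    (continuous_apply i).comp continuous_snd
  exact he.dotProduct (hA.matrix_mulVec he)

lemma neg_Q {k n : ℕ} (A : SymMat n) (e : Fin k → Fin n → ℝ) :
    ∑ i : Fin k, e i ⬝ᵥ (((-A : SymMat n) : Matrix (Fin n) (Fin n) ℝ) *ᵥ e i) =
      -∑ i : Fin k, e i ⬝ᵥ ((A : Matrix (Fin n) (Fin n) ℝ) *ᵥ e i) := by
  rw [← Finset.sum_neg_distrib]
  congr 1; ext i
  have : ((-A : SymMat n) : Matrix (Fin n) (Fin n) ℝ) =
      -(A : Matrix (Fin n) (Fin n) ℝ) := rfl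
  rw [this, neg_mulVec, dotProduct_neg]

/-- For `1 ≤ k ≤ n` and `f : ℝ → ℝ` continuous, odd and strictly increasing, the
Harvey–Lawson dual of the `k`-partial-trace subequation
`F = {(r, A) : ∀ orthonormal e₁,…,e_k, Σᵢ eᵢᵀ A eᵢ ≥ f r}` (i.e. `λ₁ + ⋯ + λ_k ≥ f r`)
equals `{(r, A) : ∃ orthonormal e₁,…,e_k, Σᵢ eᵢᵀ A eᵢ ≥ f r}`
(i.e. `λ_{n-k+1} + ⋯ + λ_n ≥ f r`). -/
theorem partial_trace_dual (n k : ℕ) (hk1 : 1 ≤ k) (hkn : k ≤ n) (f : ℝ → ℝ)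
    (hcont : Continuous f) (hodd : ∀ r : ℝ, f (-r) = -f r) (hmono : StrictMono f) :
    {x : ℝ × SymMat n | (-x.1, -x.2) ∉
        interior {y : ℝ × SymMat n |
          ∀ e : Fin k → (Fin n → ℝ), IsOrthonormalFamily e →
            f y.1 ≤ ∑ i : Fin k, e i ⬝ᵥ ((y.2 : Matrix (Fin n) (Fin n) ℝ) *ᵥ e i)}} =
      {x : ℝ × SymMat n | ∃ e : Fin k → (Fin n → ℝ), IsOrthonormalFamily e ∧
        f x.1 ≤ ∑ i : Fin k, e i ⬝ᵥ ((x.2 : Matrix (Fin n) (Fin n) ℝ) *ᵥ e i)} := by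
  set F : Set (ℝ × SymMat n) := {y : ℝ × SymMat n |
      ∀ e : Fin k → (Fin n → ℝ), IsOrthonormalFamily e →
        f y.1 ≤ ∑ i : Fin k, e i ⬝ᵥ ((y.2 : Matrix (Fin n) (Fin n) ℝ) *ᵥ e i)} with hF
  ext x
  simp only [Set.mem_setOf_eq]
  constructor
  · intro hx
    by_contra hno
    push_neg at hno
    apply hx
    rw [mem_interior_iff_mem_nhds]
    have key : ∀ᶠ y : ℝ × SymMat n in 𝓝 (-x.1, -x.2),
        ∀ e ∈ {e : Fin k → Fin n → ℝ | IsOrthonormalFamily e},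
          f y.1 < ∑ i : Fin k, e i ⬝ᵥ ((y.2 : Matrix (Fin n) (Fin n) ℝ) *ᵥ e i) := by
      apply (isCompact_onfam k n).eventually_forall_of_forall_eventually
      intro e he
      have hopen : IsOpen {z : (ℝ × SymMat n) × (Fin k → Fin n → ℝ) |
          f z.1.1 < ∑ i : Fin k, z.2 i ⬝ᵥ ((z.1.2 : Matrix (Fin n) (Fin n) ℝ) *ᵥ z.2 i)} :=
        isOpen_lt (hcont.comp (continuous_fst.comp continuous_fst)) (cont_Q k n)
      have hz : (((-x.1, -x.2) : ℝ × SymMat n), e) ∈ {z : (ℝ × SymMat n) × (Fin k → Fin n → ℝ) |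
          f z.1.1 < ∑ i : Fin k, z.2 i ⬝ᵥ ((z.1.2 : Matrix (Fin n) (Fin n) ℝ) *ᵥ z.2 i)} := by
        simp only [Set.mem_setOf_eq, neg_Q, hodd]
        linarith [hno e he]
      exact hopen.mem_nhds hz
    refine key.mono fun y hy e he => le_of_lt (hy e he)
  · rintro ⟨e, he, hQ⟩ hmem
    rw [mem_interior_iff_mem_nhds] at hmem
    have h0 : Filter.Tendsto (fun t : ℝ => ((-x.1 + t, -x.2) : ℝ × SymMat n))
        (𝓝 0) (𝓝 (-x.1, -x.2)) := by
      have hc : Continuous (fun t : ℝ => ((-x.1 + t, -x.2) : ℝ × SymMat n)) := by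
        fun_prop
      simpa using hc.tendsto 0
    have hev : ∀ᶠ t in 𝓝[>] (0 : ℝ),
        ((-x.1 + t, -x.2) : ℝ × SymMat n) ∈ F :=
      ((h0.mono_left nhdsWithin_le_nhds).eventually_mem hmem)
    obtain ⟨t, hFt, ht⟩ := (hev.and self_mem_nhdsWithin).exists
    have h1 : f (-x.1 + t) ≤
        ∑ i : Fin k, e i ⬝ᵥ (((-x.2 : SymMat n) : Matrix (Fin n) (Fin n) ℝ) *ᵥ e i) :=
      hFt e he
    rw [neg_Q] at h1
    have h2 : f (-x.1 + t) ≤ f (-x.1) := by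
      calc f (-x.1 + t) ≤ -∑ i : Fin k, e i ⬝ᵥ ((x.2 : Matrix (Fin n) (Fin n) ℝ) *ᵥ e i) := h1
        _ ≤ -f x.1 := by linarith
        _ = f (-x.1) := (hodd x.1).symm
    have h3 : f (-x.1) < f (-x.1 + t) := hmono (by linarith [ht])
    linarith
end

section
/- Let n ≥ 1 and 0 < λ ≤ Λ be real numbers. For a symmetric n × n real matrix M define the Pucci maximal and minimal operators 𝒫⁺_{λ,Λ}(M) = sup{ trace(X·M) : X symmetric with X − λI and ΛI − X positive semidefinite } and 𝒫⁻_{λ,Λ}(M) = inf{ trace(X·M) : X symmetric with X − λI and ΛI − X positive semidefinite }. Let f : ℝ → ℝ be continuous, odd and strictly increasing. Then in ℝ × Sym(n), the Harvey–Lawson dual of F⁺ = {(r, A) : f(r) ≤ 𝒫⁺_{λ,Λ}(A)} equals F⁻ = {(r, A) : f(r) ≤ 𝒫⁻_{λ,Λ}(A)}, where the dual is F̃ := {(r, A) : (−r, −A) ∉ interior F}. -/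
open Matrix

/-- The Pucci maximal operator `𝒫⁺_{λ,Λ}(M)`: the supremum of `trace (X * M)` over symmetric
matrices `X` with `λ I ≤ X ≤ Λ I` in the Loewner order. -/
noncomputable def pucciMax (n : ℕ) (l L : ℝ) (M : Matrix (Fin n) (Fin n) ℝ) : ℝ :=
  sSup {t : ℝ | ∃ X : Matrix (Fin n) (Fin n) ℝ, X.IsSymm ∧
    (X - l • (1 : Matrix (Fin n) (Fin n) ℝ)).PosSemidef ∧
    (L • (1 : Matrix (Fin n) (Fin n) ℝ) - X).PosSemidef ∧ t = (X * M).trace}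

/-- The Pucci minimal operator `𝒫⁻_{λ,Λ}(M)`: the infimum of `trace (X * M)` over symmetric
matrices `X` with `λ I ≤ X ≤ Λ I` in the Loewner order. -/
noncomputable def pucciMin (n : ℕ) (l L : ℝ) (M : Matrix (Fin n) (Fin n) ℝ) : ℝ :=
  sInf {t : ℝ | ∃ X : Matrix (Fin n) (Fin n) ℝ, X.IsSymm ∧
    (X - l • (1 : Matrix (Fin n) (Fin n) ℝ)).PosSemidef ∧
    (L • (1 : Matrix (Fin n) (Fin n) ℝ) - X).PosSemidef ∧ t = (X * M).trace}

namespace PucciAux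

variable {n : ℕ} {l L : ℝ}

/-- The set of attainable values `trace (X * M)`. -/
def S (n : ℕ) (l L : ℝ) (M : Matrix (Fin n) (Fin n) ℝ) : Set ℝ :=
  {t : ℝ | ∃ X : Matrix (Fin n) (Fin n) ℝ, X.IsSymm ∧
    (X - l • (1 : Matrix (Fin n) (Fin n) ℝ)).PosSemidef ∧
    (L • (1 : Matrix (Fin n) (Fin n) ℝ) - X).PosSemidef ∧ t = (X * M).trace}

lemma pucciMax_eq (M : Matrix (Fin n) (Fin n) ℝ) : pucciMax n l L M = sSup (S n l L M) := rfl
lemma pucciMin_eq (M : Matrix (Fin n) (Fin n) ℝ) : pucciMin n l L M = sInf (S n l L M) := rfl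

lemma quad {P : Matrix (Fin n) (Fin n) ℝ} (hP : P.PosSemidef) (x : Fin n → ℝ) :
    0 ≤ x ⬝ᵥ (P *ᵥ x) := by simpa using hP.dotProduct_mulVec_nonneg x

lemma diag_nonneg {P : Matrix (Fin n) (Fin n) ℝ} (hP : P.PosSemidef) (i : Fin n) :
    0 ≤ P i i := by
  have := quad hP (Pi.single i 1)
  simpa [Matrix.mulVec_single, single_dotProduct] using this

lemma entry_le {P : Matrix (Fin n) (Fin n) ℝ} (hP : P.PosSemidef) {c : ℝ}
    (hc : ∀ k, P k k ≤ c) (i j : Fin n) : |P i j| ≤ c := by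
  have hsym : P j i = P i j := by
    have := hP.1
    rw [Matrix.IsHermitian] at this
    calc P j i = P.conjTranspose i j := by simp [Matrix.conjTranspose_apply]
    _ = P i j := by rw [this]
  have h1 := quad hP (Pi.single i 1 + Pi.single j 1)
  have h2 := quad hP (Pi.single i 1 - Pi.single j 1)
  rw [Matrix.mulVec_add, dotProduct_add, add_dotProduct,
    add_dotProduct] at h1
  rw [Matrix.mulVec_sub, dotProduct_sub, sub_dotProduct,
    sub_dotProduct] at h2
  simp only [Matrix.mulVec_single, single_dotProduct, mul_one, one_mul, MulOpposite.op_one,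
    one_smul, Matrix.col_apply] at h1 h2
  have hii := hc i
  have hjj := hc j
  rw [abs_le]
  constructor <;> nlinarith [hsym]

lemma S_nonempty (hlL : l ≤ L) (M : Matrix (Fin n) (Fin n) ℝ) :
    (S n l L M).Nonempty := by
  refine ⟨((l • (1 : Matrix (Fin n) (Fin n) ℝ)) * M).trace, l • 1,
    Matrix.isSymm_one.smul l, by simpa using (Matrix.PosSemidef.zero (n := Fin n) (R := ℝ)),
    ?_, rfl⟩
  have h : (L • (1 : Matrix (Fin n) (Fin n) ℝ)) - l • 1 = Matrix.diagonal (fun _ => L - l) := by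
    rw [Matrix.smul_one_eq_diagonal, Matrix.smul_one_eq_diagonal, Matrix.diagonal_sub]
  rw [h]
  exact Matrix.PosSemidef.diagonal fun i => by simpa using sub_nonneg.mpr hlL

lemma diag_bounds {X : Matrix (Fin n) (Fin n) ℝ}
    (h1 : (X - l • (1 : Matrix (Fin n) (Fin n) ℝ)).PosSemidef)
    (h2 : (L • (1 : Matrix (Fin n) (Fin n) ℝ) - X).PosSemidef) (i : Fin n) :
    l ≤ X i i ∧ X i i ≤ L := by
  have a1 := diag_nonneg h1 i
  have a2 := diag_nonneg h2 i
  simp only [Matrix.sub_apply, Matrix.smul_apply, Matrix.one_apply_eq, smul_eq_mul,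
    mul_one] at a1 a2
  constructor <;> linarith

lemma abs_entry_le (hl : 0 ≤ l) {X : Matrix (Fin n) (Fin n) ℝ}
    (h1 : (X - l • (1 : Matrix (Fin n) (Fin n) ℝ)).PosSemidef)
    (h2 : (L • (1 : Matrix (Fin n) (Fin n) ℝ) - X).PosSemidef) (i j : Fin n) :
    |X i j| ≤ L := by
  by_cases hij : i = j
  · subst hij
    obtain ⟨b1, b2⟩ := diag_bounds h1 h2 i
    rw [abs_of_nonneg (le_trans hl b1)]; exact b2
  · have hdiag : ∀ k, (X - l • (1 : Matrix (Fin n) (Fin n) ℝ)) k k ≤ L - l := fun k => by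
      obtain ⟨b1, b2⟩ := diag_bounds h1 h2 k
      simp only [Matrix.sub_apply, Matrix.smul_apply, Matrix.one_apply_eq, smul_eq_mul, mul_one]
      linarith
    have := entry_le h1 hdiag i j
    have hoff : (X - l • (1 : Matrix (Fin n) (Fin n) ℝ)) i j = X i j := by
      simp [Matrix.sub_apply, Matrix.smul_apply, Matrix.one_apply_ne hij]
    rw [hoff] at this
    linarith [abs_nonneg (X i j)]

lemma trace_mul_le (hl : 0 ≤ l) {X : Matrix (Fin n) (Fin n) ℝ}
    (h1 : (X - l • (1 : Matrix (Fin n) (Fin n) ℝ)).PosSemidef)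
    (h2 : (L • (1 : Matrix (Fin n) (Fin n) ℝ) - X).PosSemidef)
    (M : Matrix (Fin n) (Fin n) ℝ) :
    (X * M).trace ≤ L * ∑ i, ∑ j, |M i j| := by
  rw [Matrix.trace]
  calc ∑ i, (X * M) i i = ∑ i, ∑ j, X i j * M j i := by
        simp [Matrix.diag, Matrix.mul_apply]
    _ ≤ ∑ i, ∑ j, L * |M j i| := by
        refine Finset.sum_le_sum fun i _ => Finset.sum_le_sum fun j _ => ?_
        calc X i j * M j i ≤ |X i j * M j i| := le_abs_self _
          _ = |X i j| * |M j i| := abs_mul _ _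
          _ ≤ L * |M j i| :=
              mul_le_mul_of_nonneg_right (abs_entry_le hl h1 h2 i j) (abs_nonneg _)
    _ = L * ∑ i, ∑ j, |M i j| := by
        rw [Finset.mul_sum]
        simp_rw [Finset.mul_sum]
        rw [Finset.sum_comm]

lemma S_bddAbove (hl : 0 ≤ l) (M : Matrix (Fin n) (Fin n) ℝ) :
    BddAbove (S n l L M) := by
  refine ⟨L * ∑ i, ∑ j, |M i j|, ?_⟩
  rintro t ⟨X, hs, h1, h2, rfl⟩
  exact trace_mul_le hl h1 h2 M

lemma trace_ge {X : Matrix (Fin n) (Fin n) ℝ}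
    (h1 : (X - l • (1 : Matrix (Fin n) (Fin n) ℝ)).PosSemidef)
    (h2 : (L • (1 : Matrix (Fin n) (Fin n) ℝ) - X).PosSemidef) :
    (n : ℝ) * l ≤ X.trace := by
  rw [Matrix.trace]
  calc (n : ℝ) * l = ∑ _i : Fin n, l := by simp [mul_comm]
    _ ≤ ∑ i, X.diag i := Finset.sum_le_sum fun i _ => (diag_bounds h1 h2 i).1

lemma S_neg (M : Matrix (Fin n) (Fin n) ℝ) : S n l L (-M) = -S n l L M := by
  ext t
  simp only [S, Set.mem_neg, Set.mem_setOf_eq]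
  constructor
  · rintro ⟨X, hs, h1, h2, rfl⟩
    exact ⟨X, hs, h1, h2, by rw [Matrix.mul_neg, Matrix.trace_neg, neg_neg]⟩
  · rintro ⟨X, hs, h1, h2, ht⟩
    exact ⟨X, hs, h1, h2, by rw [Matrix.mul_neg, Matrix.trace_neg, ← ht, neg_neg]⟩

lemma pucciMax_neg (M : Matrix (Fin n) (Fin n) ℝ) :
    pucciMax n l L (-M) = - pucciMin n l L M := by
  rw [pucciMax_eq, pucciMin_eq, Real.sInf_def, neg_neg, S_neg]

lemma pucciMax_shift (hl : 0 < l) (hlL : l ≤ L) (M : Matrix (Fin n) (Fin n) ℝ)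
    {ε : ℝ} (hε : 0 ≤ ε) :
    pucciMax n l L (M - ε • 1) ≤ pucciMax n l L M - ε * ((n : ℝ) * l) := by
  rw [pucciMax_eq]
  apply csSup_le (S_nonempty hlL _)
  rintro t ⟨X, hs, h1, h2, rfl⟩
  have h3 : (X * (M - ε • (1 : Matrix (Fin n) (Fin n) ℝ))).trace
      = (X * M).trace - ε * X.trace := by
    rw [Matrix.mul_sub, Matrix.trace_sub, Matrix.mul_smul, Matrix.mul_one, Matrix.trace_smul,
      smul_eq_mul]
  have h4 : (X * M).trace ≤ pucciMax n l L M :=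
    le_csSup (S_bddAbove hl.le M) ⟨X, hs, h1, h2, rfl⟩
  have h5 := trace_ge h1 h2
  have h6 : ε * ((n : ℝ) * l) ≤ ε * X.trace := mul_le_mul_of_nonneg_left h5 hε
  rw [h3]
  linarith

lemma interior_F (hn : 1 ≤ n) (hl : 0 < l) (hlL : l ≤ L)
    (f : ℝ → ℝ) (hcont : Continuous f) :
    interior {y : ℝ × SymMat n |
        f y.1 ≤ pucciMax n l L (y.2 : Matrix (Fin n) (Fin n) ℝ)} =
      {y : ℝ × SymMat n | f y.1 < pucciMax n l L (y.2 : Matrix (Fin n) (Fin n) ℝ)} := by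
  apply Set.Subset.antisymm
  · rintro ⟨r, A⟩ hy
    have hmem : ∀ ε : ℝ, ((A : Matrix (Fin n) (Fin n) ℝ) - ε • 1) ∈
        selfAdjoint (Matrix (Fin n) (Fin n) ℝ) := by
      intro ε
      have hA : IsSelfAdjoint (A : Matrix (Fin n) (Fin n) ℝ) := A.2
      rw [selfAdjoint.mem_iff, star_sub, star_smul, star_one, hA.star_eq]
      simp
    set g : ℝ → ℝ × SymMat n := fun ε => (r, ⟨(A : Matrix (Fin n) (Fin n) ℝ) - ε • 1, hmem ε⟩)
      with hg_def
    have hg : Continuous g := by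
      refine continuous_const.prodMk (Continuous.subtype_mk ?_ _)
      exact continuous_const.sub (continuous_id.smul continuous_const)
    have hg0 : g 0 = (r, A) := by
      simp only [hg_def]
      ext <;> simp
    have hev : ∀ᶠ ε in nhds (0 : ℝ), g ε ∈
        interior {y : ℝ × SymMat n |
          f y.1 ≤ pucciMax n l L (y.2 : Matrix (Fin n) (Fin n) ℝ)} := by
      refine (hg.tendsto 0).eventually (isOpen_interior.eventually_mem ?_)
      rwa [hg0]
    rcases Metric.eventually_nhds_iff.mp hev with ⟨δ, hδpos, hδ⟩
    have hd : dist (δ / 2) (0 : ℝ) < δ := by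
      rw [Real.dist_eq, sub_zero, abs_of_pos (by linarith)]
      linarith
    have h1 : g (δ / 2) ∈ {y : ℝ × SymMat n |
        f y.1 ≤ pucciMax n l L (y.2 : Matrix (Fin n) (Fin n) ℝ)} :=
      interior_subset (hδ hd)
    have h2 : f r ≤ pucciMax n l L ((A : Matrix (Fin n) (Fin n) ℝ) - (δ / 2) • 1) := h1
    have h3 := pucciMax_shift hl hlL (A : Matrix (Fin n) (Fin n) ℝ) (by linarith : (0:ℝ) ≤ δ / 2)
    have hpos : 0 < (δ / 2) * ((n : ℝ) * l) := by
      apply mul_pos (by linarith)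
      apply mul_pos _ hl
      exact_mod_cast Nat.lt_of_lt_of_le Nat.zero_lt_one hn
    show f r < pucciMax n l L (A : Matrix (Fin n) (Fin n) ℝ)
    linarith
  · rintro ⟨r, A⟩ hy
    simp only [Set.mem_setOf_eq] at hy
    obtain ⟨t, ⟨X, hs, h1, h2, rfl⟩, hlt⟩ :=
      exists_lt_of_lt_csSup (S_nonempty hlL (A : Matrix (Fin n) (Fin n) ℝ)) hy
    refine mem_interior.2 ⟨{y : ℝ × SymMat n |
        f y.1 < (X * (y.2 : Matrix (Fin n) (Fin n) ℝ)).trace}, ?_, ?_, hlt⟩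
    · rintro ⟨s, B⟩ hy'
      simp only [Set.mem_setOf_eq] at hy' ⊢
      exact le_trans hy'.le
        (le_csSup (S_bddAbove hl.le (B : Matrix (Fin n) (Fin n) ℝ)) ⟨X, hs, h1, h2, rfl⟩)
    · exact isOpen_lt (hcont.comp continuous_fst)
        ((continuous_const.matrix_mul (continuous_subtype_val.comp continuous_snd)).matrix_trace)

end PucciAux

/-- For `0 < λ ≤ Λ` and `f : ℝ → ℝ` continuous, odd and strictly increasing, the
Harvey–Lawson dual of `F⁺ = {(r, A) : f r ≤ 𝒫⁺_{λ,Λ}(A)}` in `ℝ × SymMat n` is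
`F⁻ = {(r, A) : f r ≤ 𝒫⁻_{λ,Λ}(A)}`. -/
theorem pucci_dual (n : ℕ) (hn : 1 ≤ n) (l L : ℝ) (hl : 0 < l) (hlL : l ≤ L)
    (f : ℝ → ℝ) (hcont : Continuous f) (hodd : ∀ r : ℝ, f (-r) = -f r)
    (hmono : StrictMono f) :
    {x : ℝ × SymMat n | (-x.1, -x.2) ∉
        interior {y : ℝ × SymMat n |
          f y.1 ≤ pucciMax n l L (y.2 : Matrix (Fin n) (Fin n) ℝ)}} =
      {x : ℝ × SymMat n | f x.1 ≤ pucciMin n l L (x.2 : Matrix (Fin n) (Fin n) ℝ)} := by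
  ext ⟨r, A⟩
  simp only [Set.mem_setOf_eq]
  rw [PucciAux.interior_F hn hl hlL f hcont]
  have hcoe : ((-A : SymMat n) : Matrix (Fin n) (Fin n) ℝ) = -(A : Matrix (Fin n) (Fin n) ℝ) :=
    rfl
  simp only [Set.mem_setOf_eq, hcoe, PucciAux.pucciMax_neg, hodd, not_lt, neg_le_neg_iff]
end

section
/- Let G be a topological abelian group (written additively) and let F, M ⊆ G satisfy F + M ⊆ F (i.e., x + y ∈ F whenever x ∈ F and y ∈ M). Define the Harvey–Lawson dual F̃ := {x ∈ G : −x ∉ interior F}. Then F̃ + M ⊆ F̃, i.e., the dual F̃ is also M-monotone. -/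
open Pointwise

/-! Translating an open set keeps it open, so `interior F + M` is an open subset of `F + M ⊆ F`,
i.e. `interior F` is again `M`-monotone. If `x ∈ F̃` and `m ∈ M` had `-(x + m) ∈ interior F`, then
`-x = -(x + m) + m ∈ interior F`, contradicting `x ∈ F̃`. -/

theorem interior_add_subset_interior {G : Type*} [TopologicalSpace G] [AddGroup G]
    [ContinuousConstVAdd Gᵃᵒᵖ G] {F M : Set G} (h : F + M ⊆ F) :
    interior F + M ⊆ interior F :=
  interior_maximal ((Set.add_subset_add_right interior_subset).trans h) isOpen_interior.add_right

/-- If `M` is a monotonicity set for `F` (i.e. `F + M ⊆ F`), then the Harvey–Lawson dual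
`F̃ = {x | -x ∉ interior F}` is also `M`-monotone: `F̃ + M ⊆ F̃`. -/
theorem hl_dual_monotone {G : Type*} [TopologicalSpace G] [AddCommGroup G]
    [IsTopologicalAddGroup G] (F M : Set G) (h : F + M ⊆ F) :
    {x : G | -x ∉ interior F} + M ⊆ {x : G | -x ∉ interior F} := by
  rintro _ ⟨x, hx, m, hm, rfl⟩ hxm
  have hnegx : -(x + m) + m ∈ interior F :=
    interior_add_subset_interior h (Set.add_mem_add hxm hm)
  exact hx (by simpa using hnegx)
end

section
/- Let (X, d) be a metric space such that for every nonempty compact set K ⊆ X and every ε > 0 there exists a function φ : X → ℝ which is Lipschitz with Lipschitz constant at most ε, has compact support, and satisfies φ(x) ≥ 1 for every x ∈ K. Then X is a complete metric space. Equivalently: if X is ∞-parabolic, then X is complete. -/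
/-! A capacity test function for the one-point set `{x}` with Lipschitz constant below `1 / r`
cannot vanish on the closed ball of radius `r` about `x`, so that ball lies in its compact
support. Hence all closed balls are compact: the space is proper, and in particular complete. -/

open Function Metric Set

theorem closedBall_subset_support_of_dist_le_mul {X : Type*} [PseudoMetricSpace X]
    {φ : X → ℝ} {x : X} {ε r : ℝ} (hφ : ∀ y, dist (φ y) (φ x) ≤ ε * dist y x)
    (hx : 1 ≤ φ x) (hε : 0 ≤ ε) (hεr : ε * r < 1) :
    closedBall x r ⊆ support φ := by
  intro y hy hφy
  have hdrop : φ x ≤ ε * r := calc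
    φ x ≤ ‖φ x‖ := Real.le_norm_self _
    _ = dist (φ y) (φ x) := by rw [hφy, dist_zero_left]
    _ ≤ ε * dist y x := hφ y
    _ ≤ ε * r := mul_le_mul_of_nonneg_left (mem_closedBall.1 hy) hε
  linarith

/-- If a metric space is `∞`-parabolic — for every nonempty compact `K` and every `ε > 0`
there is an `ε`-Lipschitz function with compact support that is `≥ 1` on `K` — then it is a
complete metric space. -/
theorem infty_parabolic_implies_complete {X : Type*} [MetricSpace X]
    (h : ∀ K : Set X, IsCompact K → K.Nonempty → ∀ ε : ℝ, 0 < ε →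
      ∃ φ : X → ℝ, (∀ x y : X, dist (φ x) (φ y) ≤ ε * dist x y) ∧
        HasCompactSupport φ ∧ ∀ x ∈ K, 1 ≤ φ x) :
    CompleteSpace X := by
  have : ProperSpace X := by
    refine ProperSpace.of_isCompact_closedBall_of_le 0 fun x r hr => ?_
    have hε : 0 < 1 / (r + 1) := by positivity
    obtain ⟨φ, hφ, hsupp, hone⟩ := h {x} isCompact_singleton (singleton_nonempty x) _ hε
    have hεr : 1 / (r + 1) * r < 1 := by
      rw [div_mul_eq_mul_div, one_mul, div_lt_one (by linarith)]; linarith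
    have hball := closedBall_subset_support_of_dist_le_mul (fun y => hφ y x)
      (hone x (mem_singleton x)) hε.le hεr
    exact hsupp.of_isClosed_subset isClosed_closedBall (hball.trans subset_closure)
  infer_instance
end
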